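/- Let T be an n×n complex matrix that is power bounded by C, and let m be a polynomial with m(T) = 0. Let ζ ∈ ℂ, and suppose f and g are holomorphic on 𝔻 with absolutely summable Taylor coefficients such that (ζ − z)·f(z) = 1 + m(z)·g(z) for all z ∈ 𝔻. Then the matrix ζI − T is invertible and ‖(ζI − T)⁻¹‖ ≤ C · ∑_{k≥0} |f̂(k)|. (This extends Nikolski's lifting inequality from polynomials to the rational function ψ(z) = 1/(ζ−z), by lifting the singularity of ψ through the minimal polynomial.) -/

import Mathlib

/-!
Power series with absolutely summable coefficients form an algebra, the Wiener algebra, and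
an element `T` of a Banach algebra that is power bounded by `C` gives an algebra homomorphism
`φ ↦ ∑ φ̂(k) T^k` out of it of norm at most `C`. By uniqueness of Taylor coefficients, the identity
`(ζ - z) f(z) = 1 + m(z) g(z)` on the unit disc already holds in the Wiener algebra; evaluating it
at `T`, where `m(T) = 0`, shows that `f(T)` inverts `ζ - T`, with `‖f(T)‖ ≤ C ‖f‖_W`.
-/

open Finset Polynomial

namespace PowerSeries

def wienerAlgebra (R : Type*) [NormedCommRing R] : Subalgebra R R⟦X⟧ where
  carrier := {φ | Summable fun k => ‖coeff k φ‖}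
  mul_mem' {φ ψ} hφ hψ := by
    simpa only [Set.mem_ofPred_eq, coeff_mul] using
      summable_norm_sum_mul_antidiagonal_of_summable_norm hφ hψ
  add_mem' {φ ψ} hφ hψ := (hφ.add hψ).of_nonneg_of_le (fun _ => norm_nonneg _) fun k => by
    simpa only [map_add] using norm_add_le _ _
  algebraMap_mem' r := summable_of_ne_finset_zero (s := {0}) fun k hk => by
    simp [coeff_C, mem_singleton.not.mp hk]

variable {R : Type*} [NormedCommRing R]

def wienerAlgebra.ofPolynomial (p : R[X]) : wienerAlgebra R :=
  ⟨p, summable_of_ne_finset_zero (s := p.support) fun k hk => by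
    simp [Polynomial.coeff_coe, Polynomial.notMem_support_iff.mp hk]⟩

@[simp]
theorem wienerAlgebra.coe_ofPolynomial (p : R[X]) : (wienerAlgebra.ofPolynomial p : R⟦X⟧) = p :=
  rfl

section Eval

variable {𝕜 A : Type*} [NormedField 𝕜] [NormedRing A] [NormedAlgebra 𝕜 A] {T : A} {C : ℝ}

theorem norm_coeff_smul_pow_le (hT : ∀ j, ‖T ^ j‖ ≤ C) (φ : 𝕜⟦X⟧) (k : ℕ) :
    ‖coeff k φ • T ^ k‖ ≤ ‖coeff k φ‖ * C :=
  (norm_smul_le _ _).trans (mul_le_mul_of_nonneg_left (hT k) (norm_nonneg _))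

theorem summable_norm_coeff_smul_pow (hT : ∀ j, ‖T ^ j‖ ≤ C) (φ : wienerAlgebra 𝕜) :
    Summable fun k => ‖coeff k (φ : 𝕜⟦X⟧) • T ^ k‖ :=
  (φ.2.mul_right C).of_nonneg_of_le (fun _ => norm_nonneg _) (norm_coeff_smul_pow_le hT _)

variable [CompleteSpace A]

noncomputable def wienerEval (hT : ∀ j, ‖T ^ j‖ ≤ C) : wienerAlgebra 𝕜 →ₐ[𝕜] A where
  toFun φ := ∑' k, coeff k (φ : 𝕜⟦X⟧) • T ^ k
  map_one' := by simp [coeff_one]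
  map_mul' φ ψ := by
    rw [tsum_mul_tsum_eq_tsum_sum_antidiagonal_of_summable_norm
      (summable_norm_coeff_smul_pow hT φ) (summable_norm_coeff_smul_pow hT ψ)]
    refine tsum_congr fun n => ?_
    rw [Subalgebra.coe_mul, coeff_mul, sum_smul]
    refine sum_congr rfl fun kl hkl => ?_
    rw [← mem_antidiagonal.mp hkl, pow_add, smul_mul_smul_comm]
  map_zero' := by simp
  map_add' φ ψ := by
    simp only [Subalgebra.coe_add, map_add, add_smul]
    exact (summable_norm_coeff_smul_pow hT φ).of_norm.tsum_add
      (summable_norm_coeff_smul_pow hT ψ).of_norm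
  commutes' r := by simp [Algebra.algebraMap_eq_smul_one]

theorem wienerEval_apply (hT : ∀ j, ‖T ^ j‖ ≤ C) (φ : wienerAlgebra 𝕜) :
    wienerEval hT φ = ∑' k, coeff k (φ : 𝕜⟦X⟧) • T ^ k := rfl

theorem norm_wienerEval_le (hT : ∀ j, ‖T ^ j‖ ≤ C) (φ : wienerAlgebra 𝕜) :
    ‖wienerEval hT φ‖ ≤ C * ∑' k, ‖coeff k (φ : 𝕜⟦X⟧)‖ :=
  calc ‖wienerEval hT φ‖ ≤ ∑' k, ‖coeff k (φ : 𝕜⟦X⟧) • T ^ k‖ :=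
        norm_tsum_le_tsum_norm (summable_norm_coeff_smul_pow hT φ)
    _ ≤ ∑' k, ‖coeff k (φ : 𝕜⟦X⟧)‖ * C :=
        (summable_norm_coeff_smul_pow hT φ).tsum_le_tsum (norm_coeff_smul_pow_le hT _)
          (φ.2.mul_right C)
    _ = C * ∑' k, ‖coeff k (φ : 𝕜⟦X⟧)‖ := by rw [tsum_mul_right, mul_comm]

theorem wienerEval_ofPolynomial (hT : ∀ j, ‖T ^ j‖ ≤ C) (p : 𝕜[X]) :
    wienerEval hT (wienerAlgebra.ofPolynomial p) = Polynomial.aeval T p := by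
  rw [wienerEval_apply hT, aeval_eq_sum_range, tsum_eq_sum (s := range (p.natDegree + 1))]
  · simp only [wienerAlgebra.coe_ofPolynomial, Polynomial.coeff_coe]
  · intro k hk
    rw [wienerAlgebra.coe_ofPolynomial, Polynomial.coeff_coe,
      coeff_eq_zero_of_natDegree_lt (by simpa using hk), zero_smul]

end Eval

theorem eq_of_wienerEval_eq {𝕜 : Type*} [NontriviallyNormedField 𝕜] [CompleteSpace 𝕜]
    {φ ψ : wienerAlgebra 𝕜}
    (h : ∀ z : 𝕜, ‖z‖ < 1 → ∀ hz : ∀ j, ‖z ^ j‖ ≤ 1, wienerEval hz φ = wienerEval hz ψ) :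
    φ = ψ := by
  have hps : HasFPowerSeriesAt 0
      (FormalMultilinearSeries.ofScalars 𝕜 fun k => coeff k (↑(φ - ψ) : 𝕜⟦X⟧)) 0 := by
    rw [hasFPowerSeriesAt_iff]
    filter_upwards [Metric.ball_mem_nhds (0 : 𝕜) one_pos] with z hz
    have hz1 : ‖z‖ < 1 := by simpa using hz
    have hzj : ∀ j, ‖z ^ j‖ ≤ 1 := fun j =>
      (norm_pow z j).trans_le (pow_le_one₀ (norm_nonneg z) hz1.le)
    have := (summable_norm_coeff_smul_pow hzj (φ - ψ)).of_norm.hasSum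
    rw [← wienerEval_apply hzj, map_sub, h z hz1 hzj, sub_self] at this
    simpa [smul_eq_mul, mul_comm] using this
  have := (FormalMultilinearSeries.ofScalars_series_eq_zero 𝕜).mp hps.eq_zero
  rw [← sub_eq_zero]
  ext k
  simpa using congrFun this k

end PowerSeries

open PowerSeries

theorem nikolski_lifting_resolvent_general
    {E : Type*} [NormedAddCommGroup E] [NormedSpace ℂ E] [FiniteDimensional ℂ E]
    (T : E →L[ℂ] E) (C : ℝ) (hpb : ∀ j : ℕ, ‖T ^ j‖ ≤ C)
    (m : Polynomial ℂ) (hm : Polynomial.aeval T m = 0)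
    (ζ : ℂ) (fc gc : ℕ → ℂ)
    (hfc : Summable fun k : ℕ => ‖fc k‖) (hgc : Summable fun k : ℕ => ‖gc k‖)
    (hrep : ∀ z : ℂ, ‖z‖ < 1 →
      (ζ - z) * ∑' k : ℕ, fc k * z ^ k = 1 + m.eval z * ∑' k : ℕ, gc k * z ^ k) :
    ∃ S : E →L[ℂ] E, (ζ • 1 - T) * S = 1 ∧ S * (ζ • 1 - T) = 1 ∧
      ‖S‖ ≤ C * ∑' k : ℕ, ‖fc k‖ := by
  let F : wienerAlgebra ℂ := ⟨mk fc, by simpa [wienerAlgebra] using hfc⟩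
  let G : wienerAlgebra ℂ := ⟨mk gc, by simpa [wienerAlgebra] using hgc⟩
  let P := wienerAlgebra.ofPolynomial (R := ℂ)
  have hlift : P (.C ζ - .X) * F = 1 + P m * G := by
    refine eq_of_wienerEval_eq fun z hz hzj => ?_
    rw [map_mul, map_add, map_one, map_mul, wienerEval_ofPolynomial, wienerEval_ofPolynomial]
    simpa [F, G, wienerEval_apply, smul_eq_mul] using hrep z hz
  have hinv : wienerEval hpb (P (.C ζ - .X)) * wienerEval hpb F = 1 := by
    rw [← map_mul, hlift, map_add, map_one, map_mul, wienerEval_ofPolynomial, hm, zero_mul,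
      add_zero]
  have hζ : wienerEval hpb (P (.C ζ - .X)) = ζ • 1 - T := by
    simp [P, wienerEval_ofPolynomial, Algebra.algebraMap_eq_smul_one]
  refine ⟨wienerEval hpb F, hζ ▸ hinv, ?_, ?_⟩
  · rw [← hζ, ← map_mul, mul_comm, map_mul, hinv]
  · simpa [F] using norm_wienerEval_le hpb F

/-- Nikolski's lifting inequality for the rational function 1/(ζ−z): If T is
power bounded by C, m(T) = 0, and (ζ−z)·f(z) = 1 + m(z)·g(z) on 𝔻 where f, g have absolutely
summable Taylor coefficients (given by the sequences `fc`, `gc`), then ζI − T is invertible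
and ‖(ζI − T)⁻¹‖ ≤ C·∑_{k≥0} |f̂(k)|. -/
theorem nikolski_lifting_resolvent
    {E : Type*} [NormedAddCommGroup E] [NormedSpace ℂ E] [FiniteDimensional ℂ E]
    (n : ℕ) (hn : 1 ≤ n) (hdim : Module.finrank ℂ E = n)
    (T : E →L[ℂ] E) (C : ℝ) (hC : 1 ≤ C) (hpb : ∀ j : ℕ, ‖T ^ j‖ ≤ C)
    (m : Polynomial ℂ) (hm : Polynomial.aeval T m = 0)
    (ζ : ℂ) (fc gc : ℕ → ℂ)
    (hfc : Summable fun k : ℕ => ‖fc k‖) (hgc : Summable fun k : ℕ => ‖gc k‖)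
    (hrep : ∀ z : ℂ, ‖z‖ < 1 →
      (ζ - z) * ∑' k : ℕ, fc k * z ^ k = 1 + m.eval z * ∑' k : ℕ, gc k * z ^ k) :
    ∃ S : E →L[ℂ] E, (ζ • 1 - T) * S = 1 ∧ S * (ζ • 1 - T) = 1 ∧
      ‖S‖ ≤ C * ∑' k : ℕ, ‖fc k‖ :=
  nikolski_lifting_resolvent_general T C hpb m hm ζ fc gc hfc hgc hrep
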